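/- Let c > 0 and let f : {-1,1}^n → {-1,1} satisfy I[f] ≤ 2^{-cn}. Then H[f] ≤ 4·((c+1)/c)·I[f]. -/
import Mathlib


open Finset Real

noncomputable def chi {n : ℕ} (S : Finset (Fin n)) (x : Fin n → Bool) : ℝ :=
  ∏ i ∈ S, (if x i then (1:ℝ) else -1)

noncomputable def coeff {n : ℕ} (f : (Fin n → Bool) → ℝ) (S : Finset (Fin n)) : ℝ :=
  (∑ x : Fin n → Bool, f x * chi S x) / 2 ^ n

noncomputable def spectralEntropy {n : ℕ} (f : (Fin n → Bool) → ℝ) : ℝ :=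
  ∑ S : Finset (Fin n), (coeff f S) ^ 2 * Real.logb 2 (1 / (coeff f S) ^ 2)

noncomputable def totalInfluence {n : ℕ} (f : (Fin n → Bool) → ℝ) : ℝ :=
  ∑ S : Finset (Fin n), (S.card : ℝ) * (coeff f S) ^ 2

noncomputable def minEntropy {n : ℕ} (f : (Fin n → Bool) → ℝ) : ℝ :=
  ⨅ S : Finset (Fin n), Real.logb 2 (1 / (coeff f S) ^ 2)

noncomputable def fVar {n : ℕ} (f : (Fin n → Bool) → ℝ) : ℝ := 1 - (coeff f ∅) ^ 2

def IsBoolean {n : ℕ} (f : (Fin n → Bool) → ℝ) : Prop := ∀ x, f x = 1 ∨ f x = -1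

noncomputable def binEnt (x : ℝ) : ℝ :=
  x * Real.logb 2 (1 / x) + (1 - x) * Real.logb 2 (1 / (1 - x))

noncomputable def l1Norm {n : ℕ} (f : (Fin n → Bool) → ℝ) : ℝ :=
  ∑ S : Finset (Fin n), |coeff f S|

noncomputable def tensor {n m : ℕ} (f : (Fin n → Bool) → ℝ) (g : (Fin m → Bool) → ℝ) :
    (Fin (n + m) → Bool) → ℝ :=
  fun x => f (fun i => x (Fin.castAdd m i)) * g (fun j => x (Fin.natAdd n j))


lemma chi_pm {n : ℕ} (S : Finset (Fin n)) (x : Fin n → Bool) : chi S x = 1 ∨ chi S x = -1 := by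
  rw [← mul_self_eq_one_iff]
  unfold chi
  rw [← Finset.prod_mul_distrib]
  apply Finset.prod_eq_one
  intro i _
  cases x i <;> norm_num

lemma sum_chi_mul_chi {n : ℕ} (x y : Fin n → Bool) :
    ∑ S : Finset (Fin n), chi S x * chi S y = if x = y then (2:ℝ) ^ n else 0 := by
  have key : ∀ S : Finset (Fin n), chi S x * chi S y
      = ∏ i ∈ S, ((if x i then (1:ℝ) else -1) * (if y i then 1 else -1)) := by
    intro S; rw [chi, chi, ← Finset.prod_mul_distrib]
  simp only [key]
  have hp : (∑ S ∈ (Finset.univ : Finset (Fin n)).powerset,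
      ∏ i ∈ S, ((if x i then (1:ℝ) else -1) * (if y i then 1 else -1)))
      = ∏ i : Fin n, (((if x i then (1:ℝ) else -1) * (if y i then 1 else -1)) + 1) := by
    rw [Finset.prod_add]
    apply Finset.sum_congr rfl
    intro t _
    simp
  rw [← Finset.powerset_univ, hp]
  by_cases h : x = y
  · subst h
    simp only [if_pos rfl]
    have h2 : ∀ i : Fin n, (((if x i then (1:ℝ) else -1) * (if x i then 1 else -1)) + 1) = 2 := by
      intro i; cases hx : x i <;> norm_num
    simp only [h2]
    simp [Finset.prod_const]
  · rw [if_neg h]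
    obtain ⟨i, hi⟩ : ∃ i, x i ≠ y i := by
      by_contra hc; push_neg at hc; exact h (funext hc)
    apply Finset.prod_eq_zero (Finset.mem_univ i)
    cases hx : x i <;> cases hy : y i <;> simp [hx, hy] at hi ⊢ <;> norm_num

lemma parseval {n : ℕ} (g : (Fin n → Bool) → ℝ) :
    ∑ S : Finset (Fin n), (coeff g S) ^ 2 = (∑ x : Fin n → Bool, (g x) ^ 2) / 2 ^ n := by
  have h2 : ((2:ℝ) ^ n) ≠ 0 := by positivity
  have key : ∑ S : Finset (Fin n), (∑ x : Fin n → Bool, g x * chi S x) ^ 2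
      = (∑ x : Fin n → Bool, (g x) ^ 2) * 2 ^ n := by
    calc ∑ S : Finset (Fin n), (∑ x : Fin n → Bool, g x * chi S x) ^ 2
        = ∑ S : Finset (Fin n), ∑ x : Fin n → Bool, ∑ y : Fin n → Bool,
            (g x * g y) * (chi S x * chi S y) := by
          apply Finset.sum_congr rfl; intro S _
          rw [sq, Finset.sum_mul_sum]
          apply Finset.sum_congr rfl; intro x _
          apply Finset.sum_congr rfl; intro y _; ring
      _ = ∑ x : Fin n → Bool, ∑ y : Fin n → Bool, (g x * g y) *
            (∑ S : Finset (Fin n), chi S x * chi S y) := by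
          rw [Finset.sum_comm]
          apply Finset.sum_congr rfl; intro x _
          rw [Finset.sum_comm]
          apply Finset.sum_congr rfl; intro y _
          rw [Finset.mul_sum]
      _ = ∑ x : Fin n → Bool, ∑ y : Fin n → Bool, (g x * g y) *
            (if x = y then (2:ℝ) ^ n else 0) := by
          simp only [sum_chi_mul_chi]
      _ = (∑ x : Fin n → Bool, (g x) ^ 2) * 2 ^ n := by
          rw [Finset.sum_mul]
          apply Finset.sum_congr rfl; intro x _
          rw [Finset.sum_eq_single x]
          · simp [sq]
          · intro y _ hy; rw [if_neg (fun h => hy h.symm), mul_zero]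
          · intro h; exact absurd (Finset.mem_univ x) h
  unfold coeff
  simp only [div_pow]
  rw [← Finset.sum_div, key]
  field_simp

def bflip {n : ℕ} (i : Fin n) (x : Fin n → Bool) : Fin n → Bool :=
  Function.update x i (!x i)

lemma bflip_involutive {n : ℕ} (i : Fin n) : Function.Involutive (bflip i) := by
  intro x
  funext j
  by_cases h : j = i
  · subst h; simp [bflip]
  · simp [bflip, Function.update_of_ne h]

def bflipEquiv {n : ℕ} (i : Fin n) : (Fin n → Bool) ≃ (Fin n → Bool) :=
  (bflip_involutive i).toPerm

lemma bflipEquiv_apply {n : ℕ} (i : Fin n) (x : Fin n → Bool) : bflipEquiv i x = bflip i x := rfl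

lemma bflip_invol {n : ℕ} (i : Fin n) (x : Fin n → Bool) : bflip i (bflip i x) = x :=
  bflip_involutive i x

lemma chi_bflip {n : ℕ} (S : Finset (Fin n)) (i : Fin n) (x : Fin n → Bool) :
    chi S (bflip i x) = (if i ∈ S then -1 else 1) * chi S x := by
  by_cases hi : i ∈ S
  · rw [if_pos hi, chi, chi, ← Finset.mul_prod_erase _ _ hi, ← Finset.mul_prod_erase _ _ hi]
    have h1 : bflip i x i = !x i := by simp [bflip]
    have h2 : ∀ j ∈ S.erase i, (if bflip i x j then (1:ℝ) else -1) = (if x j then 1 else -1) := by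
      intro j hj
      have : j ≠ i := Finset.ne_of_mem_erase hj
      simp [bflip, Function.update_of_ne this]
    rw [Finset.prod_congr rfl h2, h1]
    cases hx : x i <;> norm_num
  · rw [if_neg hi, one_mul, chi, chi]
    apply Finset.prod_congr rfl
    intro j hj
    have : j ≠ i := fun h => hi (h ▸ hj)
    simp [bflip, Function.update_of_ne this]

lemma coeff_comp_bflip {n : ℕ} (f : (Fin n → Bool) → ℝ) (i : Fin n) (S : Finset (Fin n)) :
    coeff (fun x => f (bflip i x)) S = (if i ∈ S then -1 else 1) * coeff f S := by
  unfold coeff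
  rw [← mul_div_assoc]
  congr 1
  rw [Finset.mul_sum]
  rw [← Equiv.sum_comp (bflipEquiv i) (fun x => f (bflip i x) * chi S x)]
  apply Finset.sum_congr rfl
  intro y _
  simp only [bflipEquiv_apply, bflip_invol, chi_bflip]
  ring

lemma influence_eq {n : ℕ} (f : (Fin n → Bool) → ℝ) :
    4 * totalInfluence f
      = ∑ i : Fin n, (∑ x : Fin n → Bool, (f x - f (bflip i x)) ^ 2) / 2 ^ n := by
  have key : ∀ i : Fin n, (∑ x : Fin n → Bool, (f x - f (bflip i x)) ^ 2) / 2 ^ n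
      = ∑ S : Finset (Fin n), (if i ∈ S then 4 * (coeff f S) ^ 2 else 0) := by
    intro i
    rw [← parseval (fun x => f x - f (bflip i x))]
    apply Finset.sum_congr rfl
    intro S _
    have hc : coeff (fun x => f x - f (bflip i x)) S
        = coeff f S - (if i ∈ S then -1 else 1) * coeff f S := by
      rw [← coeff_comp_bflip]
      unfold coeff
      rw [← sub_div, ← Finset.sum_sub_distrib]
      congr 1
      apply Finset.sum_congr rfl
      intro x _
      ring
    rw [hc]
    by_cases hi : i ∈ S <;> simp [hi] <;> ring
  rw [Finset.sum_congr rfl (fun i _ => key i), Finset.sum_comm]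
  unfold totalInfluence
  rw [Finset.mul_sum]
  apply Finset.sum_congr rfl
  intro S _
  rw [Finset.sum_ite_mem, Finset.univ_inter, Finset.sum_const, nsmul_eq_mul]
  ring

lemma rpow_two_le_one_add {t : ℝ} (h0 : 0 ≤ t) (h1 : t ≤ 1) : (2:ℝ) ^ t ≤ 1 + t := by
  have hconv := convexOn_exp.2 (Set.mem_univ (0:ℝ)) (Set.mem_univ (Real.log 2))
    (show (0:ℝ) ≤ 1 - t by linarith) h0 (show (1:ℝ) - t + t = 1 by ring)
  have h2 : (2:ℝ) ^ t = Real.exp (t * Real.log 2) := by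
    rw [Real.rpow_def_of_pos (by norm_num)]; ring_nf
  rw [h2]
  have : (1 - t) • (0:ℝ) + t • Real.log 2 = t * Real.log 2 := by simp
  rw [this] at hconv
  calc Real.exp (t * Real.log 2) ≤ (1 - t) • Real.exp 0 + t • Real.exp (Real.log 2) := hconv
    _ = 1 + t := by
        rw [Real.exp_zero, Real.exp_log (by norm_num)]
        simp; ring

lemma le_logb_one_add {t : ℝ} (h0 : 0 ≤ t) (h1 : t ≤ 1) : t ≤ Real.logb 2 (1 + t) := by
  have := Real.logb_le_logb_of_le (b := 2) (by norm_num) (x := (2:ℝ)^t) (y := 1 + t)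
    (Real.rpow_pos_of_pos (by norm_num) t) (rpow_two_le_one_add h0 h1)
  rwa [Real.logb_rpow (by norm_num) (by norm_num)] at this

lemma iso_analytic_aux {m a b : ℝ} (hm : 0 < m) (ha : 0 ≤ a) (hb : 0 ≤ b) (hba : b ≤ a) :
    (a + b) * Real.logb 2 (2 * m / (a + b))
      ≤ a * Real.logb 2 (m / a) + b * Real.logb 2 (m / b) + |a - b| := by
  rcases eq_or_lt_of_le hb with hb0 | hbpos
  · -- b = 0
    rcases eq_or_lt_of_le ha with ha0 | hapos
    · simp [← ha0, ← hb0]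
    · rw [← hb0]
      have : Real.logb 2 (2 * m / (a + 0)) = 1 + Real.logb 2 (m / a) := by
        rw [add_zero, ← Real.logb_self_eq_one (b := 2) (by norm_num)]
        rw [← Real.logb_mul (by norm_num) (by positivity)]
        congr 1; field_simp
      rw [this]
      rw [abs_of_nonneg (by linarith)]
      ring_nf
      nlinarith [hapos]
  · have hapos : 0 < a := lt_of_lt_of_le hbpos hba
    have habpos : 0 < a + b := by linarith
    have h1 : b ≤ a * Real.logb 2 ((a + b) / a) := by
      have ht : (a + b) / a = 1 + b / a := by field_simp
      have := le_logb_one_add (t := b / a) (by positivity) (by rw [div_le_one hapos]; linarith)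
      calc b = a * (b / a) := by field_simp
        _ ≤ a * Real.logb 2 (1 + b / a) := by
            apply mul_le_mul_of_nonneg_left this (le_of_lt hapos)
        _ = a * Real.logb 2 ((a + b) / a) := by rw [ht]
    have h2 : b ≤ b * Real.logb 2 ((a + b) / b) := by
      have h2' : (2:ℝ) ≤ (a + b) / b := by rw [le_div_iff₀ hbpos]; linarith
      have : (1:ℝ) ≤ Real.logb 2 ((a + b) / b) := by
        have := Real.logb_le_logb_of_le (b := 2) (by norm_num) (x := (2:ℝ)) (y := (a+b)/b)
          (by norm_num) h2'
        rwa [Real.logb_self_eq_one (by norm_num : (1:ℝ) < 2)] at this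
      nlinarith
    -- expand logs
    have La : Real.logb 2 (m / a) = Real.logb 2 m - Real.logb 2 a :=
      Real.logb_div (by positivity) (by positivity)
    have Lb : Real.logb 2 (m / b) = Real.logb 2 m - Real.logb 2 b :=
      Real.logb_div (by positivity) (by positivity)
    have Lab : Real.logb 2 (2 * m / (a + b))
        = 1 + Real.logb 2 m - Real.logb 2 (a + b) := by
      rw [Real.logb_div (by positivity) (by positivity),
        Real.logb_mul (by norm_num) (by positivity),
        Real.logb_self_eq_one (by norm_num : (1:ℝ) < 2)]
    have E1 : Real.logb 2 ((a + b) / a) = Real.logb 2 (a + b) - Real.logb 2 a :=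
      Real.logb_div (by positivity) (by positivity)
    have E2 : Real.logb 2 ((a + b) / b) = Real.logb 2 (a + b) - Real.logb 2 b :=
      Real.logb_div (by positivity) (by positivity)
    rw [La, Lb, Lab, abs_of_nonneg (by linarith)]
    rw [E1] at h1
    rw [E2] at h2
    nlinarith

lemma iso_analytic {m a b : ℝ} (hm : 0 < m) (ha : 0 ≤ a) (hb : 0 ≤ b) :
    (a + b) * Real.logb 2 (2 * m / (a + b))
      ≤ a * Real.logb 2 (m / a) + b * Real.logb 2 (m / b) + |a - b| := by
  rcases le_total b a with h | h
  · exact iso_analytic_aux hm ha hb h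
  · have := iso_analytic_aux hm hb ha h
    rw [add_comm b a, abs_sub_comm b a] at this
    linarith

def bd {n : ℕ} (A : Finset (Fin n → Bool)) : ℕ :=
  ∑ i : Fin n, ∑ x : Fin n → Bool, (if x ∈ A ∧ bflip i x ∉ A then 1 else 0)

lemma bflip_cons_zero {n : ℕ} (b : Bool) (y : Fin n → Bool) :
    bflip 0 (Fin.cons b y) = Fin.cons (!b) y := by
  funext j
  refine Fin.cases ?_ ?_ j
  · simp [bflip]
  · intro i
    rw [bflip, Function.update_of_ne (Fin.succ_ne_zero i)]
    simp

lemma bflip_cons_succ {n : ℕ} (i : Fin n) (b : Bool) (y : Fin n → Bool) :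
    bflip i.succ (Fin.cons b y) = Fin.cons b (bflip i y) := by
  funext j
  refine Fin.cases ?_ ?_ j
  · rw [bflip, Function.update_of_ne (Fin.succ_ne_zero i).symm]
    simp
  · intro k
    by_cases hk : k = i
    · subst hk
      rw [bflip, Function.update_self]
      simp [bflip]
    · rw [bflip, Function.update_of_ne (by simpa using fun h => hk (Fin.succ_injective _ h))]
      simp [bflip, Function.update_of_ne hk]

lemma sum_cons_split {n : ℕ} (h : (Fin (n+1) → Bool) → ℕ) :
    ∑ x : Fin (n+1) → Bool, h x
      = (∑ y : Fin n → Bool, h (Fin.cons false y)) + ∑ y : Fin n → Bool, h (Fin.cons true y) := by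
  rw [← Equiv.sum_comp (Fin.consEquiv (fun _ => Bool)) h, Fintype.sum_prod_type,
    Fintype.sum_bool]
  exact add_comm _ _

lemma bd_split {n : ℕ} (A : Finset (Fin (n+1) → Bool)) :
    bd A = ((Finset.univ.filter (fun y => Fin.cons false y ∈ A)) \
              (Finset.univ.filter (fun y => Fin.cons true y ∈ A))).card
         + ((Finset.univ.filter (fun y => Fin.cons true y ∈ A)) \
              (Finset.univ.filter (fun y => Fin.cons false y ∈ A))).card
         + bd (Finset.univ.filter (fun y => Fin.cons false y ∈ A))
         + bd (Finset.univ.filter (fun y => Fin.cons true y ∈ A)) := by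
  set A0 := Finset.univ.filter (fun y => Fin.cons false y ∈ A) with hA0
  set A1 := Finset.univ.filter (fun y => Fin.cons true y ∈ A) with hA1
  have m0 : ∀ y, (y ∈ A0 ↔ Fin.cons false y ∈ A) := by intro y; simp [hA0]
  have m1 : ∀ y, (y ∈ A1 ↔ Fin.cons true y ∈ A) := by intro y; simp [hA1]
  have hcard : ∀ (B C : Finset (Fin n → Bool)),
      (∑ y : Fin n → Bool, if y ∈ B ∧ y ∉ C then 1 else 0) = (B \ C).card := by
    intro B C
    have hc : ∀ y : Fin n → Bool, (if y ∈ B ∧ y ∉ C then (1:ℕ) else 0)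
        = if y ∈ B \ C then 1 else 0 := by
      intro y; simp [Finset.mem_sdiff]
    rw [Finset.sum_congr rfl (fun y _ => hc y),
      Finset.sum_ite_mem Finset.univ (B \ C) (fun _ => 1), Finset.univ_inter,
      Finset.sum_const, smul_eq_mul, mul_one]
  rw [bd, Fin.sum_univ_succ]
  have hzero : (∑ x : Fin (n+1) → Bool, if x ∈ A ∧ bflip 0 x ∉ A then 1 else 0)
      = (A0 \ A1).card + (A1 \ A0).card := by
    rw [sum_cons_split (fun x => if x ∈ A ∧ bflip 0 x ∉ A then 1 else 0)]
    rw [← hcard A0 A1, ← hcard A1 A0]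
    congr 1
    · apply Finset.sum_congr rfl; intro y _
      rw [bflip_cons_zero]
      simp only [Bool.not_false, m0 y, m1 y]
    · apply Finset.sum_congr rfl; intro y _
      rw [bflip_cons_zero]
      simp only [Bool.not_true, m0 y, m1 y]
  have hsucc : (∑ i : Fin n, ∑ x : Fin (n+1) → Bool, if x ∈ A ∧ bflip i.succ x ∉ A then 1 else 0)
      = bd A0 + bd A1 := by
    rw [bd, bd, ← Finset.sum_add_distrib]
    apply Finset.sum_congr rfl
    intro i _
    rw [sum_cons_split (fun x => if x ∈ A ∧ bflip i.succ x ∉ A then 1 else 0)]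
    congr 1
    · apply Finset.sum_congr rfl; intro y _
      rw [bflip_cons_succ]
      simp only [m0 y, m0 (bflip i y)]
    · apply Finset.sum_congr rfl; intro y _
      rw [bflip_cons_succ]
      simp only [m1 y, m1 (bflip i y)]
  rw [hzero, hsucc]
  ring

lemma card_split {n : ℕ} (A : Finset (Fin (n+1) → Bool)) :
    A.card = (Finset.univ.filter (fun y => Fin.cons false y ∈ A)).card
           + (Finset.univ.filter (fun y => Fin.cons true y ∈ A)).card := by
  have h : A.card = ∑ x : Fin (n+1) → Bool, if x ∈ A then 1 else 0 := by
    rw [Finset.sum_ite_mem Finset.univ A (fun _ => 1), Finset.univ_inter,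
      Finset.card_eq_sum_ones]
  rw [h, sum_cons_split (fun x => if x ∈ A then 1 else 0), Finset.card_filter,
    Finset.card_filter]

theorem iso_ineq : ∀ (n : ℕ) (A : Finset (Fin n → Bool)),
    (A.card : ℝ) * Real.logb 2 ((2:ℝ) ^ n / A.card) ≤ (bd A : ℝ) := by
  intro n
  induction n with
  | zero =>
    intro A
    have h1 : A.card ≤ 1 := by
      refine le_trans (Finset.card_le_univ A) ?_
      simp [Fintype.card_fun]
    interval_cases h : A.card <;> simp [h]
  | succ n ih =>
    intro A
    set A0 := Finset.univ.filter (fun y => Fin.cons false y ∈ A) with hA0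
    set A1 := Finset.univ.filter (fun y => Fin.cons true y ∈ A) with hA1
    have hcard := card_split A
    have hbd := bd_split A
    set a := (A0.card : ℝ)
    set b := (A1.card : ℝ)
    have ha : (0:ℝ) ≤ a := Nat.cast_nonneg _
    have hb : (0:ℝ) ≤ b := Nat.cast_nonneg _
    have hm : (0:ℝ) < 2 ^ n := by positivity
    have hAcast : (A.card : ℝ) = a + b := by rw [hcard]; push_cast; rfl
    have hcross : |a - b| ≤ ((A0 \ A1).card : ℝ) + ((A1 \ A0).card : ℝ) := by
      rw [abs_sub_le_iff]
      constructor
      · have h := Finset.card_le_card_sdiff_add_card (s := A0) (t := A1)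
        have h2 : (A0.card : ℝ) ≤ ((A0 \ A1).card : ℝ) + (A1.card : ℝ) := by
          exact_mod_cast h
        have : (0:ℝ) ≤ ((A1 \ A0).card : ℝ) := Nat.cast_nonneg _
        linarith
      · have h := Finset.card_le_card_sdiff_add_card (s := A1) (t := A0)
        have h2 : (A1.card : ℝ) ≤ ((A1 \ A0).card : ℝ) + (A0.card : ℝ) := by
          exact_mod_cast h
        have : (0:ℝ) ≤ ((A0 \ A1).card : ℝ) := Nat.cast_nonneg _
        linarith
    have hbdcast : (bd A : ℝ)
        = ((A0 \ A1).card : ℝ) + ((A1 \ A0).card : ℝ) + (bd A0 : ℝ) + (bd A1 : ℝ) := by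
      rw [hbd]; push_cast; ring
    have key : (A.card : ℝ) * Real.logb 2 ((2:ℝ) ^ (n+1) / A.card)
        = (a + b) * Real.logb 2 (2 * 2 ^ n / (a + b)) := by
      rw [hAcast]
      ring_nf
    rw [key, hbdcast]
    calc (a + b) * Real.logb 2 (2 * 2 ^ n / (a + b))
        ≤ a * Real.logb 2 ((2:ℝ) ^ n / a) + b * Real.logb 2 ((2:ℝ) ^ n / b) + |a - b| :=
          iso_analytic hm ha hb
      _ ≤ (bd A0 : ℝ) + (bd A1 : ℝ) + (((A0 \ A1).card : ℝ) + ((A1 \ A0).card : ℝ)) := by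
          have := ih A0
          have := ih A1
          linarith [hcross]
      _ = ((A0 \ A1).card : ℝ) + ((A1 \ A0).card : ℝ) + (bd A0 : ℝ) + (bd A1 : ℝ) := by ring

lemma parseval_one {n : ℕ} (f : (Fin n → Bool) → ℝ) (hf : IsBoolean f) :
    ∑ S : Finset (Fin n), (coeff f S) ^ 2 = 1 := by
  rw [parseval]
  have : ∀ x : Fin n → Bool, (f x) ^ 2 = 1 := by
    intro x; rcases hf x with h | h <;> rw [h] <;> norm_num
  rw [Finset.sum_congr rfl (fun x _ => this x), Finset.sum_const, Finset.card_univ,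
    Fintype.card_fun]
  simp [Fintype.card_fin, Fintype.card_bool]

lemma coeff_sq_le_one {n : ℕ} (f : (Fin n → Bool) → ℝ) (hf : IsBoolean f) (S : Finset (Fin n)) :
    (coeff f S) ^ 2 ≤ 1 := by
  rw [← parseval_one f hf]
  exact Finset.single_le_sum (f := fun T : Finset (Fin n) => (coeff f T)^2) (fun T _ => sq_nonneg _) (Finset.mem_univ S)

lemma coeff_dyadic {n : ℕ} (f : (Fin n → Bool) → ℝ) (hf : IsBoolean f) (S : Finset (Fin n))
    (hc : coeff f S ≠ 0) : 1 / (coeff f S) ^ 2 ≤ 4 ^ n := by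
  have hz : ∀ x : Fin n → Bool, ∃ z : ℤ, (z : ℝ) = f x * chi S x := by
    intro x
    rcases hf x with h1 | h1 <;> rcases chi_pm S x with h2 | h2 <;>
      rw [h1, h2] <;> [exact ⟨1, by norm_num⟩; exact ⟨-1, by norm_num⟩;
        exact ⟨-1, by norm_num⟩; exact ⟨1, by norm_num⟩]
  choose z hzz using hz
  have hsum : ((∑ x : Fin n → Bool, z x : ℤ) : ℝ) = 2 ^ n * coeff f S := by
    push_cast
    rw [Finset.sum_congr rfl (fun x _ => hzz x)]
    rw [coeff, mul_div_cancel₀]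
    positivity
  have hzne : (∑ x : Fin n → Bool, z x) ≠ 0 := by
    intro h
    rw [h] at hsum
    push_cast at hsum
    have h2n : ((2:ℝ)^n) ≠ 0 := by positivity
    exact hc ((mul_eq_zero.mp hsum.symm).resolve_left h2n)
  have h1 : (1:ℝ) ≤ |((∑ x : Fin n → Bool, z x : ℤ) : ℝ)| := by
    rw [← Int.cast_abs]
    exact_mod_cast Int.one_le_abs hzne
  rw [hsum, abs_mul, abs_pow, abs_two] at h1
  have h2 : (1:ℝ) ≤ (2 ^ n * |coeff f S|) ^ 2 := by
    have : (0:ℝ) ≤ 2 ^ n * |coeff f S| := by positivity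
    nlinarith [h1]
  have h3 : (1:ℝ) ≤ 4 ^ n * (coeff f S) ^ 2 := by
    have heq : ((2:ℝ) ^ n * |coeff f S|) ^ 2 = 4 ^ n * (coeff f S) ^ 2 := by
      rw [mul_pow, sq_abs, show (4:ℝ) = 2^2 from by norm_num, ← pow_mul, ← pow_mul,
        Nat.mul_comm n 2]
    rwa [heq] at h2
  rw [div_le_iff₀ (by positivity : (0:ℝ) < (coeff f S)^2)]
  linarith

lemma term_le {n : ℕ} (f : (Fin n → Bool) → ℝ) (hf : IsBoolean f) (S : Finset (Fin n)) :
    (coeff f S) ^ 2 * Real.logb 2 (1 / (coeff f S) ^ 2)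
      ≤ 2 * n * (coeff f S) ^ 2 := by
  by_cases hc : coeff f S = 0
  · simp [hc]
  · have h1 := coeff_dyadic f hf S hc
    have h2 : Real.logb 2 (1 / (coeff f S) ^ 2) ≤ Real.logb 2 ((4:ℝ) ^ n) :=
      Real.logb_le_logb_of_le (by norm_num) (by positivity) h1
    have h3 : Real.logb 2 ((4:ℝ) ^ n) = 2 * n := by
      rw [show (4:ℝ) = 2^2 by norm_num, ← pow_mul, Real.logb_pow,
        Real.logb_self_eq_one (by norm_num : (1:ℝ) < 2)]
      push_cast; ring
    calc (coeff f S) ^ 2 * Real.logb 2 (1 / (coeff f S) ^ 2)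
        ≤ (coeff f S) ^ 2 * (2 * n) := by
          apply mul_le_mul_of_nonneg_left _ (sq_nonneg _)
          rw [← h3]; exact h2
      _ = 2 * n * (coeff f S) ^ 2 := by ring

lemma empty_term_le {a : ℝ} (ha : 0 ≤ a) (ha1 : a ≤ 1) :
    a * Real.logb 2 (1 / a) ≤ 2 * (1 - a) := by
  rcases eq_or_lt_of_le ha with h0 | hpos
  · rw [← h0]; norm_num
  · have hlog : Real.log (1 / a) ≤ 1 / a - 1 :=
      Real.log_le_sub_one_of_pos (by positivity)
    have h2 : a * Real.log (1 / a) ≤ 1 - a := by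
      have := mul_le_mul_of_nonneg_left hlog (le_of_lt hpos)
      calc a * Real.log (1/a) ≤ a * (1/a - 1) := this
        _ = 1 - a := by field_simp
    have hl2 : (0.6931471803 : ℝ) < Real.log 2 := Real.log_two_gt_d9
    rw [Real.logb, div_eq_mul_inv]
    calc a * (Real.log (1/a) * (Real.log 2)⁻¹) = (a * Real.log (1/a)) * (Real.log 2)⁻¹ := by ring
      _ ≤ (1 - a) * (Real.log 2)⁻¹ := by
          apply mul_le_mul_of_nonneg_right h2
          positivity
      _ ≤ 2 * (1 - a) := by
          rw [mul_comm]
          apply mul_le_mul_of_nonneg_right _ (by linarith)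
          rw [inv_le_iff_one_le_mul₀ (by linarith)]
          linarith

lemma bd_compl {n : ℕ} (A : Finset (Fin n → Bool)) : bd (Finset.univ \ A) = bd A := by
  unfold bd
  apply Finset.sum_congr rfl
  intro i _
  rw [← Equiv.sum_comp (bflipEquiv i)
    (fun x => if x ∈ Finset.univ \ A ∧ bflip i x ∉ Finset.univ \ A then 1 else 0)]
  apply Finset.sum_congr rfl
  intro x _
  simp only [bflipEquiv_apply, bflip_invol, Finset.mem_sdiff, Finset.mem_univ, true_and]
  by_cases h1 : x ∈ A <;> by_cases h2 : bflip i x ∈ A <;> simp [h1, h2]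

lemma influence_eq_bd {n : ℕ} (f : (Fin n → Bool) → ℝ) (hf : IsBoolean f) :
    totalInfluence f = 2 * (bd (Finset.univ.filter (fun x => f x = 1)) : ℝ) / 2 ^ n := by
  set A := Finset.univ.filter (fun x => f x = 1) with hA
  have hmem : ∀ x, (x ∈ A ↔ f x = 1) := by intro x; simp [hA]
  have hnot : ∀ x, (x ∉ A ↔ f x = -1) := by
    intro x
    rcases hf x with h | h <;> simp [hmem, h] <;> norm_num
  have pointwise : ∀ (i : Fin n) (x : Fin n → Bool),
      (f x - f (bflip i x)) ^ 2
        = 4 * ((if x ∈ A ∧ bflip i x ∉ A then (1:ℝ) else 0)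
             + (if x ∈ Finset.univ \ A ∧ bflip i x ∉ Finset.univ \ A then (1:ℝ) else 0)) := by
    intro i x
    rcases hf x with h1 | h1 <;> rcases hf (bflip i x) with h2 | h2 <;>
      simp [h1, h2, (hmem _), (hnot _), Finset.mem_sdiff] <;> norm_num
  have h4 : (4:ℝ) * totalInfluence f
      = 4 * (2 * (bd A : ℝ)) / 2 ^ n := by
    rw [influence_eq f]
    have : ∀ i : Fin n, (∑ x : Fin n → Bool, (f x - f (bflip i x)) ^ 2)
        = 4 * ((∑ x : Fin n → Bool, if x ∈ A ∧ bflip i x ∉ A then (1:ℝ) else 0)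
             + (∑ x : Fin n → Bool, if x ∈ Finset.univ \ A ∧ bflip i x ∉ Finset.univ \ A then (1:ℝ) else 0)) := by
      intro i
      rw [Finset.sum_congr rfl (fun x _ => pointwise i x), ← Finset.mul_sum,
        Finset.sum_add_distrib]
    simp only [this]
    rw [← Finset.sum_div]
    rw [← Finset.mul_sum, Finset.sum_add_distrib]
    have hbdcast : ∀ (B : Finset (Fin n → Bool)),
        (∑ i : Fin n, ∑ x : Fin n → Bool, if x ∈ B ∧ bflip i x ∉ B then (1:ℝ) else 0)
          = (bd B : ℝ) := by
      intro B
      unfold bd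
      push_cast
      apply Finset.sum_congr rfl
      intro i _
      apply Finset.sum_congr rfl
      intro x _
      split <;> simp
    rw [hbdcast, hbdcast, bd_compl]
    ring_nf
  have h := h4
  field_simp at h ⊢
  linarith

lemma q_side {N k BD : ℝ} (hN : 0 < N) (hk : 0 ≤ k) (h2k : 2 * k ≤ N)
    (hiso : k * Real.logb 2 (N / k) ≤ BD) (hBD : 0 ≤ BD) :
    (4 * (k / N) * (1 - k / N)) * Real.logb 2 (1 / (4 * (k / N) * (1 - k / N)))
      ≤ 4 * BD / N := by
  rcases eq_or_lt_of_le hk with hk0 | hkpos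
  · have hV0 : 4 * (k / N) * (1 - k / N) = 0 := by rw [← hk0]; simp
    rw [hV0]
    simp
    positivity
  · set q := k / N with hq
    have hqpos : 0 < q := by positivity
    have hq2 : q ≤ 1 / 2 := by rw [hq, div_le_div_iff₀ hN (by norm_num)]; linarith
    have hNk : N / k = 1 / q := by rw [hq]; field_simp
    have hiso' : q * Real.logb 2 (1 / q) ≤ BD / N := by
      rw [← hNk, hq, div_mul_eq_mul_div]
      exact div_le_div_of_nonneg_right hiso hN.le
    have hlogq0 : 0 ≤ Real.logb 2 (1 / q) := by
      apply Real.logb_nonneg (by norm_num)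
      rw [le_div_iff₀ hqpos]; linarith
    set V := 4 * q * (1 - q) with hV
    have hV2q : 2 * q ≤ V := by nlinarith
    have hVpos : 0 < V := by nlinarith
    have hmono : Real.logb 2 (1 / V) ≤ Real.logb 2 (1 / q) := by
      apply Real.logb_le_logb_of_le (by norm_num) (by positivity)
      apply one_div_le_one_div_of_le hqpos
      nlinarith
    calc V * Real.logb 2 (1 / V) ≤ V * Real.logb 2 (1 / q) :=
          mul_le_mul_of_nonneg_left hmono (le_of_lt hVpos)
      _ ≤ (4 * q) * Real.logb 2 (1 / q) := by
          apply mul_le_mul_of_nonneg_right _ hlogq0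
          nlinarith
      _ ≤ 4 * (BD / N) := by nlinarith
      _ = 4 * BD / N := by ring

lemma coeff_empty_eq {n : ℕ} (f : (Fin n → Bool) → ℝ) (hf : IsBoolean f) :
    coeff f ∅ = (2 * ((Finset.univ.filter (fun x => f x = 1)).card : ℝ) - 2 ^ n) / 2 ^ n := by
  set A := Finset.univ.filter (fun x => f x = 1) with hA
  have hchi : ∀ x : Fin n → Bool, chi (∅ : Finset (Fin n)) x = 1 := by
    intro x; rw [chi, Finset.prod_empty]
  have hfx : ∀ x : Fin n → Bool, f x = if x ∈ A then (1:ℝ) else -1 := by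
    intro x
    rcases hf x with h | h <;> simp [hA, h] <;> norm_num
  rw [coeff]
  congr 1
  rw [Finset.sum_congr rfl (fun x _ => by rw [hchi x, mul_one, hfx x])]
  rw [Finset.sum_ite, Finset.sum_const, Finset.sum_const]
  have h1 : Finset.univ.filter (fun x => x ∈ A) = A := Finset.filter_univ_mem A
  have h2 : Finset.univ.filter (fun x => ¬ x ∈ A) = Finset.univ \ A := by
    rw [Finset.filter_not, h1]
  have hAle : A.card ≤ 2 ^ n := by
    refine le_trans (Finset.card_le_univ A) ?_
    simp [Fintype.card_fun]
  rw [h1, h2, Finset.card_sdiff_of_subset (Finset.subset_univ A), Finset.card_univ]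
  have hcu : Fintype.card (Fin n → Bool) = 2 ^ n := by simp [Fintype.card_fun]
  rw [hcu, nsmul_eq_mul, nsmul_eq_mul]
  push_cast [Nat.cast_sub hAle]
  ring

lemma var_log_le {n : ℕ} (f : (Fin n → Bool) → ℝ) (hf : IsBoolean f) :
    fVar f * Real.logb 2 (1 / fVar f) ≤ 2 * totalInfluence f := by
  set A := Finset.univ.filter (fun x => f x = 1) with hA
  set N : ℝ := 2 ^ n with hN
  have hNpos : (0:ℝ) < N := by rw [hN]; positivity
  set k : ℝ := (A.card : ℝ) with hk
  have hk0 : 0 ≤ k := Nat.cast_nonneg _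
  have hkN : k ≤ N := by
    rw [hk, hN]
    have : A.card ≤ 2 ^ n := by
      refine le_trans (Finset.card_le_univ A) ?_
      simp [Fintype.card_fun]
    exact_mod_cast this
  have hVar : fVar f = 4 * (k / N) * (1 - k / N) := by
    rw [fVar, coeff_empty_eq f hf, ← hA, ← hk, ← hN]
    field_simp
    ring
  have hI : totalInfluence f = 2 * (bd A : ℝ) / N := by
    rw [influence_eq_bd f hf, ← hA, ← hN]
  have hBD : (0:ℝ) ≤ (bd A : ℝ) := Nat.cast_nonneg _
  have hiso1 : k * Real.logb 2 (N / k) ≤ (bd A : ℝ) := iso_ineq n A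
  have hcompl_card : ((Finset.univ \ A).card : ℝ) = N - k := by
    rw [Finset.cast_card_sdiff (Finset.subset_univ A), Finset.card_univ, ← hk]
    have hcu : Fintype.card (Fin n → Bool) = 2 ^ n := by simp [Fintype.card_fun]
    rw [hcu, hN]
    push_cast
    ring
  have hiso2 : (N - k) * Real.logb 2 (N / (N - k)) ≤ (bd A : ℝ) := by
    have := iso_ineq n (Finset.univ \ A)
    rw [hcompl_card, bd_compl, ← hN] at this
    exact this
  rw [hVar, hI]
  rcases le_total (2 * k) N with h2k | h2k
  · have := q_side hNpos hk0 h2k hiso1 hBD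
    calc 4 * (k / N) * (1 - k / N) * Real.logb 2 (1 / (4 * (k / N) * (1 - k / N)))
        ≤ 4 * (bd A : ℝ) / N := this
      _ = 2 * (2 * (bd A : ℝ) / N) := by ring
  · have hk'0 : (0:ℝ) ≤ N - k := by linarith
    have h2k' : 2 * (N - k) ≤ N := by linarith
    have := q_side hNpos hk'0 h2k' hiso2 hBD
    have heq : 4 * (k / N) * (1 - k / N) = 4 * ((N - k) / N) * (1 - (N - k) / N) := by
      field_simp
      ring
    rw [heq]
    calc 4 * ((N-k) / N) * (1 - (N-k) / N)
          * Real.logb 2 (1 / (4 * ((N-k) / N) * (1 - (N-k) / N)))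
        ≤ 4 * (bd A : ℝ) / N := this
      _ = 2 * (2 * (bd A : ℝ) / N) := by ring

theorem FEI_low_influence (c : ℝ) (hc : 0 < c) {n : ℕ} (f : (Fin n → Bool) → ℝ)
    (hf : IsBoolean f) (hI : totalInfluence f ≤ 2 ^ (-(c * n))) :
    spectralEntropy f ≤ 4 * ((c + 1) / c) * totalInfluence f := by
  set I := totalInfluence f with hIdef
  have hI0 : 0 ≤ I := by
    rw [hIdef, totalInfluence]
    apply Finset.sum_nonneg
    intro S _
    positivity
  set a := (coeff f ∅) ^ 2 with haDef
  have ha0 : 0 ≤ a := sq_nonneg _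
  have ha1 : a ≤ 1 := coeff_sq_le_one f hf ∅
  have hVar0 : 0 ≤ fVar f := by rw [fVar]; linarith
  -- split entropy
  have hsplit : spectralEntropy f
      = a * Real.logb 2 (1 / a)
        + ∑ S ∈ Finset.univ.erase ∅, (coeff f S) ^ 2 * Real.logb 2 (1 / (coeff f S) ^ 2) := by
    rw [spectralEntropy,
      ← Finset.add_sum_erase Finset.univ
        (fun S => (coeff f S) ^ 2 * Real.logb 2 (1 / (coeff f S) ^ 2))
        (Finset.mem_univ (∅ : Finset (Fin n)))]
  have hPsplit : ∑ S ∈ Finset.univ.erase ∅, (coeff f S) ^ 2 = fVar f := by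
    have := parseval_one f hf
    rw [← Finset.add_sum_erase Finset.univ (fun S => (coeff f S) ^ 2)
      (Finset.mem_univ (∅ : Finset (Fin n)))] at this
    rw [fVar]
    linarith
  have hrest : ∑ S ∈ Finset.univ.erase ∅, (coeff f S) ^ 2 * Real.logb 2 (1 / (coeff f S) ^ 2)
      ≤ 2 * n * fVar f := by
    calc ∑ S ∈ Finset.univ.erase ∅, (coeff f S) ^ 2 * Real.logb 2 (1 / (coeff f S) ^ 2)
        ≤ ∑ S ∈ Finset.univ.erase ∅, 2 * n * (coeff f S) ^ 2 :=
          Finset.sum_le_sum (fun S _ => term_le f hf S)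
      _ = 2 * n * fVar f := by rw [← Finset.mul_sum, hPsplit]
  have hH : spectralEntropy f ≤ 2 * fVar f + 2 * n * fVar f := by
    have he : a * Real.logb 2 (1 / a) ≤ 2 * (1 - a) := empty_term_le ha0 ha1
    have hfa : fVar f = 1 - a := by rw [fVar]
    rw [hsplit]
    linarith
  have hVarleI : fVar f ≤ I := by
    rw [← hPsplit, hIdef, totalInfluence]
    calc ∑ S ∈ Finset.univ.erase ∅, (coeff f S) ^ 2
        ≤ ∑ S ∈ Finset.univ.erase ∅, (S.card : ℝ) * (coeff f S) ^ 2 := by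
          apply Finset.sum_le_sum
          intro S hS
          have hSne : S ≠ ∅ := Finset.ne_of_mem_erase hS
          have hc1 : 1 ≤ (S.card : ℝ) := by
            have := Finset.card_pos.mpr (Finset.nonempty_of_ne_empty hSne)
            exact_mod_cast this
          nlinarith [sq_nonneg (coeff f S)]
      _ ≤ ∑ S : Finset (Fin n), (S.card : ℝ) * (coeff f S) ^ 2 := by
          apply Finset.sum_le_sum_of_subset_of_nonneg (Finset.erase_subset _ _)
          intro S _ _
          positivity
  have hRHS : 4 * ((c + 1) / c) * I = 4 * I + 4 / c * I := by
    field_simp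
  rcases eq_or_lt_of_le hVar0 with hV0 | hVpos
  · -- fVar = 0
    rw [hRHS]
    have : spectralEntropy f ≤ 0 := by rw [← hV0] at hH; linarith
    have h4c : 0 ≤ 4 / c * I := by positivity
    linarith
  · have hIpos : 0 < I := lt_of_lt_of_le hVpos hVarleI
    have hlogI : Real.logb 2 I ≤ -(c * n) := by
      calc Real.logb 2 I ≤ Real.logb 2 ((2:ℝ) ^ (-(c * (n:ℝ)))) :=
            Real.logb_le_logb_of_le (by norm_num) hIpos hI
        _ = -(c * n) := Real.logb_rpow (by norm_num) (by norm_num)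
    have hlogV : c * n ≤ Real.logb 2 (1 / fVar f) := by
      rw [one_div, Real.logb_inv]
      have : Real.logb 2 (fVar f) ≤ Real.logb 2 I :=
        Real.logb_le_logb_of_le (by norm_num) hVpos hVarleI
      linarith
    have hkey : c * n * fVar f ≤ 2 * I := by
      calc c * n * fVar f ≤ Real.logb 2 (1 / fVar f) * fVar f :=
            mul_le_mul_of_nonneg_right hlogV hVar0
        _ = fVar f * Real.logb 2 (1 / fVar f) := by ring
        _ ≤ 2 * totalInfluence f := var_log_le f hf
        _ = 2 * I := by rw [hIdef]
    have h2n : 2 * n * fVar f ≤ 4 / c * I := by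
      have h2c : (0:ℝ) < 2 / c := by positivity
      have := mul_le_mul_of_nonneg_left hkey (le_of_lt h2c)
      have e1 : 2 / c * (c * n * fVar f) = 2 * n * fVar f := by field_simp
      have e2 : 2 / c * (2 * I) = 4 / c * I := by ring
      rw [e1, e2] at this
      exact this
    rw [hRHS]
    have h2v : 2 * fVar f ≤ 2 * I := by linarith
    linarith
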